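/- arXiv:math/0607556 — 3 statements merged into one kernel-verified Lean document; each statement's English description precedes it below -/
import Mathlib

section
/- Let {x_1,…,x_n} be a basis of the free group F_n and 1 ≤ k ≤ n−1. If φ̂ ∈ Aut(F_n) leaves both ⟨x_1,…,x_k⟩ and ⟨x_1,…,x_{k+1}⟩ invariant, then φ̂(x_{k+1}) = u·x_{k+1}^{±1}·v for some u, v ∈ ⟨x_1,…,x_k⟩. -/
/-!
Write `H = ⟨x_1, …, x_k⟩` and `x = x_{k+1}`. Cutting off the longest prefix and suffix of the
reduced word of `φ̂(x)` that lie in `H` gives `φ̂(x) = u * c * v` with `u, v ∈ H` and the reduced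
word of `c` beginning and ending with letters outside `H`. Invariance of both subgroups gives
`x ∈ ⟨H, φ̂(x)⟩ = ⟨H, c⟩`. If `c` had length at least two, every nonzero power of `c` would again
begin and end outside `H` (look at its cyclic reduction), so the reduced word of an alternating
product `c^{j₁} h₁ ⋯ c^{jᵣ} hᵣ` would be the concatenation of the pieces; every element of
`⟨H, c⟩` outside `H` would then have length at least two, whereas `x ∉ H` has length one. Hence
`c` is a single letter, and it must be `x^{±1}`.
-/

/-- The subgroup of `F_n` generated by the first `k` basis elements `x_1, …, x_k`
(indices `0, …, k-1`). -/
def firstKSubgroup (n k : ℕ) : Subgroup (FreeGroup (Fin n)) :=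
  Subgroup.closure (FreeGroup.of '' {i : Fin n | (i : ℕ) < k})

namespace Subgroup

variable {G : Type*} [Group G] (H : Subgroup G) (g : G)

/-- Products `g ^ j₁ * h₁ * g ^ j₂ * h₂ * ⋯ * g ^ jᵣ * hᵣ` with all `jᵢ ≠ 0`, all `hᵢ ∈ H`, and
`hᵢ ≠ 1` for `i < r`. -/
inductive AltProd : G → Prop
  | single {j : ℤ} {h : G} : j ≠ 0 → h ∈ H → AltProd (g ^ j * h)
  | cons {j : ℤ} {h t : G} : j ≠ 0 → h ∈ H → h ≠ 1 → AltProd t → AltProd (g ^ j * h * t)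

def AltForm (y : G) : Prop :=
  y ∈ H ∨ ∃ h ∈ H, ∃ t, AltProd H g t ∧ y = h * t

variable {H g}

theorem AltForm.one : AltForm H g 1 := .inl H.one_mem

theorem AltForm.mul_left {a y : G} (ha : a ∈ H) : AltForm H g y → AltForm H g (a * y)
  | .inl hy => .inl (H.mul_mem ha hy)
  | .inr ⟨h, hh, t, ht, hy⟩ => .inr ⟨a * h, H.mul_mem ha hh, t, ht, by rw [hy, mul_assoc]⟩

theorem AltForm.zpow_mul {y : G} (hy : AltForm H g y) (j : ℤ) : AltForm H g (g ^ j * y) := by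
  by_cases hj : j = 0
  · rwa [hj, zpow_zero, one_mul]
  rcases hy with hy | ⟨h, hh, t, ht, rfl⟩
  · exact .inr ⟨1, H.one_mem, _, .single hj hy, (one_mul _).symm⟩
  by_cases h1 : h ≠ 1
  · exact .inr ⟨1, H.one_mem, _, .cons hj hh h1 ht, by group⟩
  rw [not_not.1 h1, one_mul]
  cases ht with
  | @single j' h' hj' hh' =>
    rw [← mul_assoc, ← zpow_add]
    by_cases hjj : j + j' = 0
    · exact .inl (by rwa [hjj, zpow_zero, one_mul])
    · exact .inr ⟨1, H.one_mem, _, .single hjj hh', (one_mul _).symm⟩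
  | @cons j' h' t' hj' hh' h1' ht' =>
    rw [← mul_assoc, ← mul_assoc, ← zpow_add]
    by_cases hjj : j + j' = 0
    · exact .inr ⟨h', hh', t', ht', by rw [hjj, zpow_zero, one_mul]⟩
    · exact .inr ⟨1, H.one_mem, _, .cons hjj hh' h1' ht', (one_mul _).symm⟩

theorem altForm_of_mem_closure {y : G} (hy : y ∈ closure (↑H ∪ {g})) : AltForm H g y := by
  induction hy using closure_induction_left with
  | one => exact .one
  | mul_left a ha y _ ih =>
    rcases ha with ha | rfl
    · exact ih.mul_left ha
    · simpa using ih.zpow_mul 1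
  | inv_mul_cancel a ha y _ ih =>
    rcases ha with ha | rfl
    · exact ih.mul_left (H.inv_mem ha)
    · simpa using ih.zpow_mul (-1)

theorem closure_union_singleton_mul_mul_le {a v b : G} (ha : a ∈ H) (hb : b ∈ H) :
    closure (↑H ∪ {a * v * b}) ≤ closure (↑H ∪ {v}) := by
  have hH : H ≤ closure (↑H ∪ {v}) := (closure_eq H).ge.trans (closure_mono Set.subset_union_left)
  refine closure_le _ |>.2 (Set.union_subset (fun h hh => hH hh) ?_)
  rintro _ rfl
  exact mul_mem (mul_mem (hH ha) (subset_closure (.inr rfl))) (hH hb)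

end Subgroup

namespace FreeGroup

variable {α : Type*}

open Subgroup

theorem mk_mem_closure_image_of {s : Set α} {L : List (α × Bool)} (hL : ∀ l ∈ L, l.1 ∈ s) :
    mk L ∈ closure (of '' s) := by
  induction L with
  | nil => exact one_mem _
  | cons l L ih =>
    rw [← List.singleton_append, ← mul_mk]
    refine mul_mem ?_ (ih fun l' hl' => hL l' (List.mem_cons_of_mem _ hl'))
    have hof : of l.1 ∈ closure (of '' s) := subset_closure ⟨l.1, hL l List.mem_cons_self, rfl⟩
    rcases l with ⟨a, _ | _⟩
    · exact inv_mem hof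
    · exact hof

theorem map_closure_image_insert_le {G : Type*} [Group G] (f : FreeGroup α →* G) (s : Set α)
    (t : α) :
    (closure (of '' insert t s)).map f ≤ closure (↑((closure (of '' s)).map f) ∪ {f (of t)}) := by
  rw [MonoidHom.map_closure, closure_le]
  rintro _ ⟨_, ⟨i, rfl | hi, rfl⟩, rfl⟩
  · exact subset_closure (.inr rfl)
  · exact subset_closure (.inl ⟨of i, subset_closure ⟨i, hi, rfl⟩, rfl⟩)

variable [DecidableEq α]

theorem toWord_mul_of_fst_ne {x y : FreeGroup α}
    (h : ∀ a ∈ x.toWord.getLast?, ∀ b ∈ y.toWord.head?, a.1 ≠ b.1) :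
    (x * y).toWord = x.toWord ++ y.toWord := by
  rw [toWord_mul]
  exact IsReduced.reduce_eq <| List.isChain_append.2
    ⟨isReduced_toWord, isReduced_toWord, fun a ha b hb hab => absurd hab (h a ha b hb)⟩

theorem mem_closure_image_of_iff {s : Set α} {g : FreeGroup α} :
    g ∈ closure (of '' s) ↔ ∀ l ∈ g.toWord, l.1 ∈ s := by
  refine ⟨fun hg => ?_, fun h => mk_toWord (x := g) ▸ mk_mem_closure_image_of h⟩
  induction hg using closure_induction with
  | mem _ h => obtain ⟨a, ha, rfl⟩ := h; simpa using ha
  | one => simp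
  | mul x y _ _ hx hy =>
    exact fun l hl => (List.mem_append.1 ((toWord_mul_sublist x y).subset hl)).elim (hx l) (hy l)
  | inv x _ hx =>
    intro l hl
    obtain ⟨l', hl', rfl⟩ := List.mem_map.1 (List.mem_reverse.1 (toWord_inv x ▸ hl))
    exact hx l' hl'

theorem head?_toWord_pow_succ (x : FreeGroup α) (n : ℕ) :
    (x ^ (n + 1)).toWord.head? = x.toWord.head? := by
  rw [toWord_pow, reduceCyclically.reduce_flatten_replicate_succ isReduced_toWord]
  conv_rhs => rw [← reduceCyclically.conj_conjugator_reduceCyclically x.toWord]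
  simp [List.head?_append, List.head?_flatten_replicate]

theorem getLast?_toWord_pow_succ (x : FreeGroup α) (n : ℕ) :
    (x ^ (n + 1)).toWord.getLast? = x.toWord.getLast? := by
  rw [toWord_pow, reduceCyclically.reduce_flatten_replicate_succ isReduced_toWord]
  conv_rhs => rw [← reduceCyclically.conj_conjugator_reduceCyclically x.toWord]
  simp [List.getLast?_append, List.getLast?_flatten_replicate]

theorem length_toWord_le_pow_succ (x : FreeGroup α) (n : ℕ) :
    x.toWord.length ≤ (x ^ (n + 1)).toWord.length := by
  rw [toWord_pow, reduceCyclically.reduce_flatten_replicate_succ isReduced_toWord]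
  conv_lhs => rw [← reduceCyclically.conj_conjugator_reduceCyclically x.toWord]
  simpa using Nat.le_mul_of_pos_left _ n.succ_pos

theorem head?_toWord_inv (x : FreeGroup α) :
    x⁻¹.toWord.head? = x.toWord.getLast?.map fun l => (l.1, !l.2) := by
  simp [invRev, List.head?_reverse, List.getLast?_map]

theorem getLast?_toWord_inv (x : FreeGroup α) :
    x⁻¹.toWord.getLast? = x.toWord.head?.map fun l => (l.1, !l.2) := by
  simp [invRev, List.getLast?_reverse, List.head?_map]

def EndsOutside (s : Set α) (g : FreeGroup α) : Prop :=
  (∀ l ∈ g.toWord.head?, l.1 ∉ s) ∧ ∀ l ∈ g.toWord.getLast?, l.1 ∉ s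

variable {s : Set α} {g : FreeGroup α}

theorem EndsOutside.inv (hg : EndsOutside s g) : EndsOutside s g⁻¹ := by
  refine ⟨fun l hl => ?_, fun l hl => ?_⟩
  · rw [head?_toWord_inv] at hl
    obtain ⟨l', hl', rfl⟩ := Option.map_eq_some_iff.1 hl
    exact hg.2 l' hl'
  · rw [getLast?_toWord_inv] at hl
    obtain ⟨l', hl', rfl⟩ := Option.map_eq_some_iff.1 hl
    exact hg.1 l' hl'

theorem EndsOutside.pow_succ (hg : EndsOutside s g) (n : ℕ) : EndsOutside s (g ^ (n + 1)) := by
  rw [EndsOutside, head?_toWord_pow_succ, getLast?_toWord_pow_succ]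
  exact hg

theorem EndsOutside.zpow (hg : EndsOutside s g) : ∀ {j : ℤ}, j ≠ 0 → EndsOutside s (g ^ j)
  | (n + 1 : ℕ), _ => by simpa only [zpow_natCast] using hg.pow_succ n
  | .negSucc n, _ => by simpa only [zpow_negSucc] using (hg.pow_succ n).inv

theorem length_toWord_le_zpow (g : FreeGroup α) : ∀ {j : ℤ}, j ≠ 0 →
    g.toWord.length ≤ (g ^ j).toWord.length
  | (n + 1 : ℕ), _ => by simpa only [zpow_natCast] using length_toWord_le_pow_succ g n
  | .negSucc n, _ => by
    simpa only [zpow_negSucc, toWord_inv, invRev_length] using length_toWord_le_pow_succ g n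

theorem toWord_zpow_mul_of_mem (hg : EndsOutside s g) {j : ℤ} (hj : j ≠ 0) {h : FreeGroup α}
    (hh : h ∈ closure (of '' s)) : (g ^ j * h).toWord = (g ^ j).toWord ++ h.toWord :=
  toWord_mul_of_fst_ne fun a ha b hb hab =>
    (hg.zpow hj).2 a ha (hab ▸ mem_closure_image_of_iff.1 hh b (List.mem_of_mem_head? hb))

theorem head?_length_toWord_zpow_mul_of_mem (hg : EndsOutside s g) (hlen₀ : 2 ≤ g.toWord.length)
    {j : ℤ} (hj : j ≠ 0) {h : FreeGroup α} (hh : h ∈ closure (of '' s)) :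
    (∀ l ∈ (g ^ j * h).toWord.head?, l.1 ∉ s) ∧ 2 ≤ (g ^ j * h).toWord.length := by
  have hlen := hlen₀.trans (length_toWord_le_zpow g hj)
  rw [toWord_zpow_mul_of_mem hg hj hh, List.length_append,
    List.head?_append_of_ne_nil _ (List.ne_nil_of_length_pos (by omega))]
  exact ⟨(hg.zpow hj).1, by omega⟩

theorem head?_length_toWord_of_altProd (hg : EndsOutside s g) (hlen₀ : 2 ≤ g.toWord.length)
    {t : FreeGroup α} (ht : AltProd (closure (of '' s)) g t) :
    (∀ l ∈ t.toWord.head?, l.1 ∉ s) ∧ 2 ≤ t.toWord.length := by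
  induction ht with
  | single hj hh => exact head?_length_toWord_zpow_mul_of_mem hg hlen₀ hj hh
  | @cons j h t hj hh h1 _ ih =>
    obtain ⟨hhead, hlen⟩ := head?_length_toWord_zpow_mul_of_mem hg hlen₀ hj hh
    have hh' : h.toWord ≠ [] := by simpa using h1
    have hword : (g ^ j * h * t).toWord = (g ^ j * h).toWord ++ t.toWord := by
      refine toWord_mul_of_fst_ne fun a ha b hb hab => ih.1 b hb (hab ▸ ?_)
      rw [toWord_zpow_mul_of_mem hg hj hh, List.getLast?_append_of_ne_nil _ hh'] at ha
      exact mem_closure_image_of_iff.1 hh a (List.mem_of_mem_getLast? ha)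
    rw [hword, List.length_append,
      List.head?_append_of_ne_nil _ (List.ne_nil_of_length_pos (by omega))]
    exact ⟨hhead, by omega⟩

theorem mem_or_two_le_length_of_mem_closure (hg : EndsOutside s g) (hlen₀ : 2 ≤ g.toWord.length)
    {y : FreeGroup α} (hy : y ∈ closure (↑(closure (of '' s)) ∪ {g})) :
    y ∈ closure (of '' s) ∨ 2 ≤ y.toWord.length := by
  obtain hy | ⟨h, hh, t, ht, rfl⟩ := altForm_of_mem_closure hy
  · exact .inl hy
  obtain ⟨hhead, hlen⟩ := head?_length_toWord_of_altProd hg hlen₀ ht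
  right
  rw [toWord_mul_of_fst_ne fun a ha b hb hab =>
    hhead b hb (hab ▸ mem_closure_image_of_iff.1 hh a (List.mem_of_mem_getLast? ha))]
  simpa using le_add_left hlen

theorem exists_mem_toWord_of_of_mem_closure {t : α} (ht : t ∉ s)
    (h : of t ∈ closure (↑(closure (of '' s)) ∪ {g})) : ∃ l ∈ g.toWord, l.1 = t := by
  have hle : closure (↑(closure (of '' s)) ∪ {g}) ≤
      closure (of '' (s ∪ {a | ∃ l ∈ g.toWord, l.1 = a})) := by
    refine closure_le _ |>.2 (Set.union_subset ?_ ?_)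
    · exact closure_mono (Set.image_mono Set.subset_union_left)
    · exact Set.singleton_subset_iff.2 <| mem_closure_image_of_iff.2 fun l hl => .inr ⟨l, hl, rfl⟩
  simpa [ht] using mem_closure_image_of_iff.1 (hle h) (t, true)

theorem EndsOutside.eq_of_or_eq_inv (hg : EndsOutside s g) {t : α} (ht : t ∉ s)
    (h : of t ∈ closure (↑(closure (of '' s)) ∪ {g})) : g = of t ∨ g = (of t)⁻¹ := by
  have hlen : g.toWord.length < 2 := by
    by_contra! hlen₀
    rcases mem_or_two_le_length_of_mem_closure hg hlen₀ h with hs | hs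
    · simpa [ht] using mem_closure_image_of_iff.1 hs (t, true)
    · simp at hs
  obtain ⟨⟨t', e⟩, hl, rfl⟩ := exists_mem_toWord_of_of_mem_closure ht h
  have hword : g.toWord = [(t', e)] := by
    rcases hw : g.toWord with _ | ⟨l, _ | ⟨l', L⟩⟩ <;> simp_all
  rw [← toWord_inj, ← toWord_inj (x := g), hword]
  cases e <;> simp [invRev]

theorem exists_eq_mul_mul_endsOutside (s : Set α) (g : FreeGroup α) :
    ∃ a ∈ closure (of '' s), ∃ b ∈ closure (of '' s), ∃ v, EndsOutside s v ∧ g = a * v * b := by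
  classical
  set p : α × Bool → Bool := fun l => decide (l.1 ∈ s)
  set R := g.toWord.dropWhile p
  set V := R.rdropWhile p
  have hV : (mk V).toWord = V := IsReduced.reduce_eq <|
    isReduced_toWord.infix <|
      (List.rdropWhile_prefix p R).isInfix.trans (List.dropWhile_suffix p).isInfix
  refine ⟨mk (g.toWord.takeWhile p), mk_mem_closure_image_of fun l hl => ?_,
    mk (R.rtakeWhile p), mk_mem_closure_image_of fun l hl => ?_, mk V,
    ⟨fun l hl => ?_, fun l hl => ?_⟩, ?_⟩
  · simpa [p] using List.mem_takeWhile_imp hl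
  · simpa [p] using List.mem_rtakeWhile_imp hl
  · rw [hV] at hl
    have hV0 : V ≠ [] := by rintro h; simp [h] at hl
    have hR0 : R ≠ [] := fun h => hV0 (by simp [V, h])
    rw [List.head?_eq_some_head hV0, Option.mem_def, Option.some_inj] at hl
    have := List.head_dropWhile_not p hR0
    rw [← (List.rdropWhile_prefix p R).head hV0] at this
    subst hl
    simpa [p] using this
  · rw [hV] at hl
    have hV0 : V ≠ [] := by rintro h; simp [h] at hl
    rw [List.getLast?_eq_some_getLast hV0, Option.mem_def, Option.some_inj] at hl
    subst hl
    simpa [p] using List.rdropWhile_last_not p R hV0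
  · rw [mul_mk, mul_mk, List.append_assoc, List.rdropWhile_append_rtakeWhile,
      List.takeWhile_append_dropWhile, mk_toWord]

theorem exists_eq_mul_of_mul_or_mul_inv_mul {t : α} (ht : t ∉ s)
    (h : of t ∈ closure (↑(closure (of '' s)) ∪ {g})) : ∃ a ∈ closure (of '' s),
      ∃ b ∈ closure (of '' s), g = a * of t * b ∨ g = a * (of t)⁻¹ * b := by
  obtain ⟨a, ha, b, hb, v, hv, rfl⟩ := exists_eq_mul_mul_endsOutside s g
  exact ⟨a, ha, b, hb, hv.eq_of_or_eq_inv ht (closure_union_singleton_mul_mul_le ha hb h) |>.imp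
    (congrArg (a * · * b)) (congrArg (a * · * b))⟩

end FreeGroup

theorem image_of_next_basis_element_general (n k : ℕ) (hk2 : k < n)
    (φ : MulAut (FreeGroup (Fin n)))
    (h1 : (firstKSubgroup n k).map φ.toMonoidHom = firstKSubgroup n k)
    (h2 : (firstKSubgroup n (k + 1)).map φ.toMonoidHom = firstKSubgroup n (k + 1)) :
    ∃ u v : FreeGroup (Fin n), u ∈ firstKSubgroup n k ∧ v ∈ firstKSubgroup n k ∧
      (φ (FreeGroup.of ⟨k, hk2⟩) = u * FreeGroup.of ⟨k, hk2⟩ * v ∨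
       φ (FreeGroup.of ⟨k, hk2⟩) = u * (FreeGroup.of ⟨k, hk2⟩)⁻¹ * v) := by
  set x : Fin n := ⟨k, hk2⟩
  have hset : {i : Fin n | (i : ℕ) < k + 1} = insert x {i : Fin n | (i : ℕ) < k} := by
    ext i
    simp [x, Fin.ext_iff]
    omega
  have hle : (firstKSubgroup n (k + 1)).map φ.toMonoidHom ≤
      Subgroup.closure (↑((firstKSubgroup n k).map φ.toMonoidHom) ∪ {φ (FreeGroup.of x)}) := by
    unfold firstKSubgroup
    rw [hset]
    exact FreeGroup.map_closure_image_insert_le φ.toMonoidHom _ x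
  rw [h1, h2] at hle
  have hx : FreeGroup.of x ∈ firstKSubgroup n (k + 1) :=
    Subgroup.subset_closure ⟨x, by simp [x], rfl⟩
  have hxs : x ∉ {i : Fin n | (i : ℕ) < k} := lt_irrefl k
  obtain ⟨u, hu, v, hv, h⟩ := FreeGroup.exists_eq_mul_of_mul_or_mul_inv_mul hxs (hle hx)
  exact ⟨u, v, hu, hv, h⟩

/-- If `φ̂ ∈ Aut(F_n)` leaves both `⟨x_1,…,x_k⟩` and `⟨x_1,…,x_{k+1}⟩` invariant,
then `φ̂(x_{k+1}) = u·x_{k+1}^{±1}·v` with `u, v ∈ ⟨x_1,…,x_k⟩`. -/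
theorem image_of_next_basis_element (n k : ℕ) (hk1 : 1 ≤ k) (hk2 : k < n)
    (φ : MulAut (FreeGroup (Fin n)))
    (h1 : (firstKSubgroup n k).map φ.toMonoidHom = firstKSubgroup n k)
    (h2 : (firstKSubgroup n (k + 1)).map φ.toMonoidHom = firstKSubgroup n (k + 1)) :
    ∃ u v : FreeGroup (Fin n), u ∈ firstKSubgroup n k ∧ v ∈ firstKSubgroup n k ∧
      (φ (FreeGroup.of ⟨k, hk2⟩) = u * FreeGroup.of ⟨k, hk2⟩ * v ∨
       φ (FreeGroup.of ⟨k, hk2⟩) = u * (FreeGroup.of ⟨k, hk2⟩)⁻¹ * v) :=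
  image_of_next_basis_element_general n k hk2 φ h1 h2
end

section
/- Let h be a simplicial automorphism of the Farey graph F (vertices: pairs (p,q) of coprime integers up to sign, i.e. slopes in ℚ ∪ {∞}; edges between (p,q) and (r,s) when |ps − rq| = 1). If h fixes the vertices (0,1) and (1,0), and h maps some vertex (s,1) with s > 0 to a vertex (t,1) with t > 0, then h is the identity. -/
/-!
Adjacency to `∞` singles out the integers, so `h` restricts to an injective self-map of the path
graph `ℤ`; such a map is `n ↦ φ 0 ± n`, and the normalisations `h 0 = 0`, `h s = t` force the
identity there. A non-integer `p/Q` has two Farey parents `u/v`, `(p-u)/(Q-v)` with smaller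
denominators, adjacent to it and to each other. The edge between them lies in exactly two
triangles, whose third vertices are `p/Q` and one of denominator `|Q - 2v| < Q`; by induction on the
denominator `h` fixes the parents and every vertex of smaller denominator, hence also `p/Q`.
-/

/-- The coprime pair of integers representing a Farey vertex: `none` is `∞ = (1,0)`
and a rational `p/q` in lowest terms is `(p, q)`. -/
def fareyPair : Option ℚ → ℤ × ℤ
  | none => (1, 0)
  | some x => (x.num, (x.den : ℤ))

/-- Adjacency in the Farey graph: `(p,q)` and `(r,s)` are joined iff `|ps - rq| = 1`. -/
def FareyAdj (u v : Option ℚ) : Prop :=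
  |(fareyPair u).1 * (fareyPair v).2 - (fareyPair v).1 * (fareyPair u).2| = 1

theorem Int.eq_apply_zero_add_mul_of_injective_of_abs_sub_eq_one {φ : ℤ → ℤ}
    (hinj : Function.Injective φ) (hstep : ∀ n, |φ (n + 1) - φ n| = 1) (n : ℤ) :
    φ n = φ 0 + n * (φ 1 - φ 0) := by
  have hconst : ∀ n, φ (n + 1) - φ n = φ n - φ (n - 1) := by
    intro n
    have hback := hstep (n - 1)
    rw [sub_add_cancel] at hback
    rcases abs_eq_abs.1 ((hstep n).trans hback.symm) with h | h
    · exact h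
    · have : n + 1 = n - 1 := hinj (by linarith)
      omega
  have hdiff : ∀ n, φ (n + 1) - φ n = φ 1 - φ 0 := by
    intro n
    induction n using Int.induction_on with
    | zero => simp
    | succ k ih => rw [hconst, add_sub_cancel_right, ih]
    | pred k ih => rw [← ih, hconst (-k), sub_add_cancel]
  induction n using Int.induction_on with
  | zero => simp
  | succ k ih => linarith [hdiff k]
  | pred k ih =>
    have := hdiff (-k - 1)
    rw [sub_add_cancel] at this
    linarith

theorem Int.exists_mul_sub_mul_eq_one {p Q : ℤ} (hQ : 2 ≤ Q) (hpQ : IsCoprime p Q) :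
    ∃ u v : ℤ, 0 < v ∧ v < Q ∧ p * v - Q * u = 1 := by
  obtain ⟨a, b, hab⟩ := hpQ
  have hbez : p * (a % Q) - Q * -(b + p * (a / Q)) = 1 := by
    rw [Int.emod_def]; linear_combination hab
  have hQ0 : 0 < Q := by omega
  refine ⟨_, a % Q, ?_, Int.emod_lt_of_pos a hQ0, hbez⟩
  rcases (Int.emod_nonneg a hQ0.ne').lt_or_eq with hlt | heq
  · exact hlt
  · rw [← heq] at hbez
    have := Int.le_of_dvd one_pos (⟨b + p * (a / Q), by linarith⟩ : Q ∣ 1)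
    omega

theorem Int.eq_add_or_eq_sub_of_abs_det_eq_one {a b c d p q : ℤ} (hdet : |a * d - b * c| = 1)
    (h₁ : |a * q - p * b| = 1) (h₂ : |c * q - p * d| = 1) :
    (p = a + c ∧ q = b + d) ∨ (p = -(a + c) ∧ q = -(b + d)) ∨
      (p = a - c ∧ q = b - d) ∨ (p = -(a - c) ∧ q = -(b - d)) := by
  have hp : p * (a * d - b * c) = (a * q - p * b) * c - (c * q - p * d) * a := by ring
  have hq : q * (a * d - b * c) = (a * q - p * b) * d - (c * q - p * d) * b := by ring
  rcases abs_eq_abs.1 (hdet.trans abs_one.symm) with hd | hd <;> rw [hd] at hp hq <;>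
    rcases abs_eq_abs.1 (h₁.trans abs_one.symm) with h₁ | h₁ <;> rw [h₁] at hp hq <;>
    rcases abs_eq_abs.1 (h₂.trans abs_one.symm) with h₂ | h₂ <;> rw [h₂] at hp hq <;> omega

theorem Rat.num_den_div_of_isCoprime {a b : ℤ} (hb : 0 < b) (hab : IsCoprime a b) :
    (a / b : ℚ).num = a ∧ ((a / b : ℚ).den : ℤ) = b := by
  have hcop : a.natAbs.Coprime b.natAbs := Int.isCoprime_iff_gcd_eq_one.1 hab
  exact ⟨Rat.num_div_eq_of_coprime hb hcop, Rat.den_div_eq_of_coprime hb hcop⟩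

theorem fareyAdj_some_iff (x y : ℚ) :
    FareyAdj (some x) (some y) ↔ |x.num * y.den - y.num * x.den| = 1 :=
  Iff.rfl

theorem fareyAdj_none_some_iff (y : ℚ) : FareyAdj none (some y) ↔ y.den = 1 := by
  simp [FareyAdj, fareyPair]

theorem fareyAdj_intCast_iff (m n : ℤ) : FareyAdj (some (m : ℚ)) (some (n : ℚ)) ↔ |m - n| = 1 := by
  simp [FareyAdj, fareyPair]

theorem Rat.exists_fareyParents (x : ℚ) (hx : x.den ≠ 1) :
    ∃ A B : ℚ, A.den < x.den ∧ B.den < x.den ∧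
      FareyAdj (some A) (some x) ∧ FareyAdj (some B) (some x) ∧
      ∀ y : ℚ, FareyAdj (some A) (some y) → FareyAdj (some B) (some y) → y = x ∨ y.den < x.den := by
  set p := x.num
  set Q : ℤ := (x.den : ℤ)
  have hQ2 : 2 ≤ Q := by have := x.pos; omega
  obtain ⟨u, v, hv, hvQ, hbez⟩ :=
    Int.exists_mul_sub_mul_eq_one hQ2 (Int.isCoprime_iff_gcd_eq_one.2 x.reduced)
  obtain ⟨hAn, hAd⟩ := Rat.num_den_div_of_isCoprime hv ⟨-Q, p, by linarith⟩
  obtain ⟨hBn, hBd⟩ := Rat.num_den_div_of_isCoprime (a := p - u) (b := Q - v) (by omega)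
    ⟨Q, -p, by linear_combination hbez⟩
  refine ⟨u / v, ((p - u : ℤ) : ℚ) / ((Q - v : ℤ) : ℚ), by omega, by omega, ?_, ?_, ?_⟩
  · rw [fareyAdj_some_iff, hAn, hAd, show u * Q - p * v = -1 by linarith, abs_neg, abs_one]
  · rw [fareyAdj_some_iff, hBn, hBd, show (p - u) * Q - p * (Q - v) = 1 by linarith, abs_one]
  · intro y hAy hBy
    rw [fareyAdj_some_iff, hAn, hAd] at hAy
    rw [fareyAdj_some_iff, hBn, hBd] at hBy
    have hdet : |u * (Q - v) - v * (p - u)| = 1 := by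
      rw [show u * (Q - v) - v * (p - u) = -1 by linarith, abs_neg, abs_one]
    have hy := y.pos
    rcases Int.eq_add_or_eq_sub_of_abs_det_eq_one hdet hAy hBy with h | h | h | h
    · exact Or.inl (Rat.ext (by omega) (by omega))
    all_goals omega

section FareyEmbedding

variable {f : Option ℚ → Option ℚ} (hf : Function.Injective f)
  (hadj : ∀ u v, FareyAdj u v → FareyAdj (f u) (f v)) (hinf : f none = none)

include hf hinf in
theorem exists_apply_some_eq_some (x : ℚ) : ∃ y, f (some x) = some y :=
  Option.ne_none_iff_exists'.1 fun hx => Option.some_ne_none x (hf (hx.trans hinf.symm))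

include hf hadj hinf in
theorem apply_intCast_eq_self (h0 : f (some 0) = some 0)
    (hpos : ∃ s t : ℤ, 0 < s ∧ 0 < t ∧ f (some (s : ℚ)) = some (t : ℚ)) (n : ℤ) :
    f (some (n : ℚ)) = some (n : ℚ) := by
  have hint : ∀ n : ℤ, ∃ m : ℤ, f (some (n : ℚ)) = some (m : ℚ) := by
    intro n
    obtain ⟨y, hy⟩ := exists_apply_some_eq_some hf hinf n
    have hy1 := hadj none (some n) ((fareyAdj_none_some_iff _).2 (Rat.den_intCast n))
    rw [hinf, hy, fareyAdj_none_some_iff] at hy1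
    exact ⟨y.num, by rw [hy, Rat.coe_int_num_of_den_eq_one hy1]⟩
  choose φ hφ using hint
  have hφinj : Function.Injective φ := fun m n hmn => by
    have := hf ((hφ m).trans (hmn ▸ (hφ n).symm))
    exact_mod_cast Option.some_injective _ this
  have hstep : ∀ n, |φ (n + 1) - φ n| = 1 := by
    intro n
    have := hadj _ _ ((fareyAdj_intCast_iff (n + 1) n).2 (by simp))
    rwa [hφ, hφ, fareyAdj_intCast_iff] at this
  have hφ0 : φ 0 = 0 := by
    have := (hφ 0).symm.trans (by exact_mod_cast h0)
    exact_mod_cast Option.some_injective _ this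
  have hφ1 : φ 1 = 1 := by
    obtain ⟨s, t, hs, ht, hst⟩ := hpos
    have hφs : φ s = t := by exact_mod_cast Option.some_injective _ ((hφ s).symm.trans hst)
    have hφs' := Int.eq_apply_zero_add_mul_of_injective_of_abs_sub_eq_one hφinj hstep s
    have h1 := hstep 0
    rw [hφ0, zero_add, sub_zero] at h1 hφs'
    rcases abs_eq_abs.1 (h1.trans abs_one.symm) with h | h
    · exact h
    · nlinarith
  rw [hφ, Int.eq_apply_zero_add_mul_of_injective_of_abs_sub_eq_one hφinj hstep n, hφ0, hφ1]
  simp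

include hf hadj hinf in
theorem apply_some_eq_self_of_apply_intCast (hint : ∀ n : ℤ, f (some (n : ℚ)) = some (n : ℚ))
    (x : ℚ) : f (some x) = some x := by
  induction hq : x.den using Nat.strong_induction_on generalizing x with
  | _ q ih =>
  by_cases hx : x.den = 1
  · rw [← Rat.coe_int_num_of_den_eq_one hx]
    exact hint _
  obtain ⟨A, B, hA, hB, hAx, hBx, hcommon⟩ := Rat.exists_fareyParents x hx
  obtain ⟨y, hy⟩ := exists_apply_some_eq_some hf hinf x
  have hAy := hadj _ _ hAx
  have hBy := hadj _ _ hBx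
  rw [ih _ (hq ▸ hA) A rfl, hy] at hAy
  rw [ih _ (hq ▸ hB) B rfl, hy] at hBy
  rcases hcommon y hAy hBy with rfl | hlt
  · exact hy
  · have hxy := Option.some_injective _ (hf (hy.trans (ih _ (hq ▸ hlt) y rfl).symm))
    exact absurd (hxy ▸ hlt) (lt_irrefl _)

end FareyEmbedding

/-- An automorphism of the Farey graph fixing `0 = (0,1)` and `∞ = (1,0)` and
sending some vertex `(s,1)` with `s > 0` to a vertex `(t,1)` with `t > 0` is the
identity. -/
theorem farey_rigidity (h : Option ℚ ≃ Option ℚ)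
    (hadj : ∀ u v : Option ℚ, FareyAdj (h u) (h v) ↔ FareyAdj u v)
    (h0 : h (some 0) = some 0) (hinf : h none = none)
    (hpos : ∃ s t : ℤ, 0 < s ∧ 0 < t ∧ h (some (s : ℚ)) = some (t : ℚ)) :
    h = Equiv.refl (Option ℚ) := by
  have hmap : ∀ u v, FareyAdj u v → FareyAdj (h u) (h v) := fun u v => (hadj u v).2
  have hint := apply_intCast_eq_self h.injective hmap hinf h0 hpos
  ext x : 1
  cases x with
  | none => exact hinf
  | some x => exact apply_some_eq_self_of_apply_intCast h.injective hmap hinf hint x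
end

section
/- Let n ≥ 3 and let {x_1,…,x_n} be a basis of F_n. Suppose φ̂ ∈ Aut(F_n) satisfies φ̂(x_i) = x_i^{ε_i} with ε_i = ±1 for all i, and φ̂ preserves the conjugacy class of x_i x_j x_k up to inversion for all distinct i, j, k (i.e. x_i^{ε_i} x_j^{ε_j} x_k^{ε_k} is conjugate to x_i x_j x_k or to (x_i x_j x_k)⁻¹). Then ε_i = 1 for all i, i.e. φ̂ is the identity. -/
private def coord {n : ℕ} (i : Fin n) : FreeGroup (Fin n) →* Multiplicative ℤ :=
  FreeGroup.lift (fun t => Multiplicative.ofAdd (if t = i then (1:ℤ) else 0))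

private lemma coord_eval {n : ℕ} (i j k l : Fin n) (a b c : ℤ) :
    (coord l (FreeGroup.of i ^ a * FreeGroup.of j ^ b * FreeGroup.of k ^ c)).toAdd
      = a * (if i = l then (1:ℤ) else 0) + b * (if j = l then (1:ℤ) else 0)
        + c * (if k = l then (1:ℤ) else 0) := by
  simp [coord, toAdd_zpow, mul_comm]

private lemma nonconj :
    ¬ IsConj ((Equiv.swap (1:Fin 3) 2)⁻¹ * (Equiv.swap (0:Fin 3) 1)⁻¹ * (finRotate 3)⁻¹)
      ((finRotate 3)⁻¹ * (Equiv.swap (0:Fin 3) 1)⁻¹ * (Equiv.swap (1:Fin 3) 2)⁻¹) := by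
  rw [isConj_iff]
  decide

/-- Final step of Lemma "recognize identity": if `φ̂(x_i) = x_i^{ε_i}` with
`ε_i = ±1` for all `i`, and for all distinct `i, j, k` the word
`x_i^{ε_i} x_j^{ε_j} x_k^{ε_k}` is conjugate to `x_i x_j x_k` or to its inverse,
then all `ε_i = 1`, i.e. `φ̂` is the identity. -/
theorem signs_all_one (n : ℕ) (hn : 3 ≤ n) (ε : Fin n → ℤ)
    (hε : ∀ i, ε i = 1 ∨ ε i = -1)
    (h : ∀ i j k : Fin n, i ≠ j → j ≠ k → i ≠ k →
      IsConj (FreeGroup.of i ^ ε i * FreeGroup.of j ^ ε j * FreeGroup.of k ^ ε k)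
        (FreeGroup.of i * FreeGroup.of j * FreeGroup.of k) ∨
      IsConj (FreeGroup.of i ^ ε i * FreeGroup.of j ^ ε j * FreeGroup.of k ^ ε k)
        (FreeGroup.of i * FreeGroup.of j * FreeGroup.of k)⁻¹) :
    ∀ i, ε i = 1 := by
  intro i
  -- pick j ≠ i and k ∉ {i, j}
  obtain ⟨j, hjmem⟩ : (({i} : Finset (Fin n))ᶜ).Nonempty := by
    rw [← Finset.card_pos, Finset.card_compl, Finset.card_singleton, Fintype.card_fin]; omega
  have hji : j ≠ i := by simpa using hjmem
  obtain ⟨k, hkmem⟩ : (({i, j} : Finset (Fin n))ᶜ).Nonempty := by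
    rw [← Finset.card_pos, Finset.card_compl, Fintype.card_fin]
    have : ({i, j} : Finset (Fin n)).card ≤ 2 := Finset.card_insert_le _ _ |>.trans (by simp)
    omega
  have hki : k ≠ i := by simp at hkmem; tauto
  have hkj : k ≠ j := by simp at hkmem; tauto
  have hij : i ≠ j := hji.symm
  have hjk : j ≠ k := hkj.symm
  have hik : i ≠ k := hki.symm
  rcases h i j k hij hjk hik with hc | hc
  · -- conjugate to x_i x_j x_k : coordinate at i gives ε i = 1
    have := isConj_iff_eq.mp ((coord i).map_isConj hc)
    have e1 := congrArg Multiplicative.toAdd this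
    rw [coord_eval] at e1
    have e2 : (coord i (FreeGroup.of i * FreeGroup.of j * FreeGroup.of k)).toAdd
        = 1 * (if i = i then (1:ℤ) else 0) + 1 * (if j = i then (1:ℤ) else 0)
          + 1 * (if k = i then (1:ℤ) else 0) := by
      have := coord_eval i j k i 1 1 1
      simpa using this
    rw [e2] at e1
    simpa [hji, hki] using e1
  · -- conjugate to (x_i x_j x_k)⁻¹ : all three ε's are -1, then contradiction
    exfalso
    have key : ∀ l : Fin n, l = i ∨ l = j ∨ l = k → ε l = -1 := by
      intro l hl
      have := isConj_iff_eq.mp ((coord l).map_isConj hc)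
      have e1 := congrArg Multiplicative.toAdd this
      rw [coord_eval] at e1
      have e2 : (coord l ((FreeGroup.of i * FreeGroup.of j * FreeGroup.of k)⁻¹)).toAdd
          = -((if i = l then (1:ℤ) else 0) + (if j = l then (1:ℤ) else 0)
            + (if k = l then (1:ℤ) else 0)) := by
        rw [map_inv]
        have := coord_eval i j k l 1 1 1
        simp only [zpow_one] at this
        simp [coord, this]
      rw [e2] at e1
      rcases hl with rfl | rfl | rfl
      · simpa [hji, hki] using e1
      · simpa [hij, hkj] using e1
      · simpa [hik, hjk] using e1
    have ei : ε i = -1 := key i (Or.inl rfl)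
    have ej : ε j = -1 := key j (Or.inr (Or.inl rfl))
    have ek : ε k = -1 := key k (Or.inr (Or.inr rfl))
    rw [ei, ej, ek] at hc
    simp only [zpow_neg_one] at hc
    -- map to Perm (Fin 3)
    set g : FreeGroup (Fin n) →* Equiv.Perm (Fin 3) :=
      FreeGroup.lift (fun t => if t = i then Equiv.swap 1 2
        else if t = j then Equiv.swap 0 1 else if t = k then finRotate 3 else 1) with hg
    have gi : g (FreeGroup.of i) = Equiv.swap 1 2 := by simp [hg]
    have gj : g (FreeGroup.of j) = Equiv.swap 0 1 := by simp [hg, hji]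
    have gk : g (FreeGroup.of k) = finRotate 3 := by simp [hg, hki, hkj]
    have := g.map_isConj hc
    rw [map_mul, map_mul, map_inv, map_inv, map_inv, map_inv, map_mul, map_mul,
      mul_inv_rev, mul_inv_rev, gi, gj, gk] at this
    exact nonconj this
end
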